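/- Let L ≥ 1, N ≥ 1 and let (X_{l,n})_{1≤l≤L, 1≤n≤N} be mutually independent Nakagami random variables, where X_{l,n} has shape m_{l,n} > 0 and scale Ω_{l,n} > 0, and suppose m_{l,n} > m_{1,n} for every n and every l = 2, …, L. Define H = Σ_{n=1}^N ∏_{l=1}^L X_{l,n}, t' = Σ_{n=1}^N m_{1,n}, and g = ∏_{n=1}^N [ 2 (Γ(2m_{1,n})/Γ(m_{1,n})) · (∏_{l=2}^L Γ(m_{l,n} − m_{1,n})/Γ(m_{l,n})) · ∏_{l=1}^L Ω_{l,n}^{m_{1,n}} ]. Then for every h ≥ 0, the cumulative distribution function of H satisfies P(H ≤ h) ≤ g · h^{2t'} / Γ(2t' + 1). -/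

import Mathlib

open MeasureTheory ProbabilityTheory Real

noncomputable def nakagamiPDF (m Ω x : ℝ) : ℝ :=
  if 0 < x then 2 * Ω ^ m / Real.Gamma m * x ^ (2 * m - 1) * Real.exp (-Ω * x ^ 2) else 0

def IsNakagami {E : Type*} [MeasurableSpace E] (P : MeasureTheory.Measure E)
    (X : E → ℝ) (m Ω : ℝ) : Prop :=
  MeasureTheory.Measure.map X P =
    MeasureTheory.volume.withDensity (fun x => ENNReal.ofReal (nakagamiPDF m Ω x))

/-!
Write `k_B(u) = u₊ ^ B / Γ(B + 1)`, so that `P(H ≤ h) = E k_0(h - H)`. Instead of the distribution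
function alone, bound the whole family `E k_B(b - c Y) ≤ G c⁻ᵃ k_{B+a}(b)` (`B ≥ 0`, `c > 0`):
it passes to a sum `Y + Z` of independent variables (apply it to `Y` with `b` shifted by `c Z`, then
to `Z` with `B` raised by `a_Y`; constants multiply and exponents add) and to a product `Y Z` with
`Z > 0` independent of `Y` (apply it to `Y` at the scale `c Z`; `G` gets multiplied by `E Z⁻ᵃ`).
A Nakagami variable satisfies it with `a = 2m` and `G = 2 Γ(2m) Ω ^ m / Γ(m)`: bound
`exp (-Ω x²)` by `1` and evaluate a Beta integral. Each column `∏ l, X l n` thus inherits the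
exponent `2 m_{1,n}` of its first factor, at the cost of the negative moments
`E X⁻²ᵐ¹ = Ω ^ m₁ Γ(m - m₁) / Γ(m)`, finite because `m₁ < m`, and the independent columns add up.
-/
open scoped ENNReal
open Set

lemma setLIntegral_Ioo_rpow_mul_one_sub_rpow {p q : ℝ} (hp : 0 < p) (hq : 0 < q) :
    ∫⁻ x in Ioo 0 1, ENNReal.ofReal (x ^ (p - 1) * (1 - x) ^ (q - 1)) =
      ENNReal.ofReal (beta p q) := by
  have h := lintegral_betaPDF_eq_one hp hq
  simp_rw [lintegral_betaPDF, mul_assoc,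
    ENNReal.ofReal_mul (one_div_nonneg.2 (beta_pos hp hq).le),
    lintegral_const_mul' _ _ ENNReal.ofReal_ne_top] at h
  rw [mul_comm] at h
  rw [ENNReal.eq_inv_of_mul_eq_one_left h, one_div, ENNReal.ofReal_inv_of_pos (beta_pos hp hq),
    inv_inv]

lemma setLIntegral_Ioo_comp_mul_left {a : ℝ} (ha : 0 < a) (f : ℝ → ℝ≥0∞) :
    ∫⁻ x in Ioo 0 1, f (a * x) = ENNReal.ofReal a⁻¹ * ∫⁻ t in Ioo 0 a, f t := by
  have hemb := measurableEmbedding_mulLeft₀ ha.ne'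
  have hpre : (a * ·) ⁻¹' Ioo 0 a = Ioo 0 1 := by
    rw [preimage_const_mul_Ioo₀ _ _ ha, zero_div, div_self ha.ne']
  rw [← hpre, ← hemb.lintegral_map, ← hemb.restrict_map, Real.map_volume_mul_left ha.ne',
    Measure.restrict_smul, lintegral_smul_measure, abs_of_pos (inv_pos.2 ha), smul_eq_mul]

lemma setLIntegral_Ioc_rpow_mul_sub_rpow {p q b c : ℝ} (hp : 0 < p) (hq : 0 < q) (hb : 0 < b)
    (hc : 0 < c) :
    ∫⁻ t in Ioc 0 (b / c), ENNReal.ofReal (t ^ (p - 1) * (b - c * t) ^ (q - 1)) =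
      ENNReal.ofReal (c ^ (-p) * b ^ (p + q - 1) * beta p q) := by
  set a := b / c with ha_def
  have ha : 0 < a := div_pos hb hc
  have hscaled : ∀ x ∈ Ioo (0 : ℝ) 1, (a * x) ^ (p - 1) * (b - c * (a * x)) ^ (q - 1) =
      a ^ (p - 1) * b ^ (q - 1) * (x ^ (p - 1) * (1 - x) ^ (q - 1)) := fun x hx => by
    rw [show b - c * (a * x) = b * (1 - x) by rw [ha_def]; field_simp,
      Real.mul_rpow ha.le hx.1.le, Real.mul_rpow hb.le (by linarith [hx.2])]
    ring
  have hval : a * (a ^ (p - 1) * b ^ (q - 1) * beta p q) =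
      c ^ (-p) * b ^ (p + q - 1) * beta p q := by
    rw [← mul_assoc, ← mul_assoc, ← Real.rpow_one_add' ha.le (by linarith), add_sub_cancel,
      ha_def, Real.div_rpow hb.le hc.le, Real.rpow_neg hc.le,
      show p + q - 1 = p + (q - 1) by ring, Real.rpow_add hb]
    ring
  have hunscaled := setLIntegral_Ioo_comp_mul_left ha
    (fun t => ENNReal.ofReal (t ^ (p - 1) * (b - c * t) ^ (q - 1)))
  rw [setLIntegral_congr_fun measurableSet_Ioo (fun x hx => by rw [hscaled x hx]),
    setLIntegral_congr_fun measurableSet_Ioo (fun x hx => ENNReal.ofReal_mul (by positivity)),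
    lintegral_const_mul' _ _ ENNReal.ofReal_ne_top,
    setLIntegral_Ioo_rpow_mul_one_sub_rpow hp hq] at hunscaled
  rw [setLIntegral_congr Ioo_ae_eq_Ioc.symm, ← hval, ENNReal.ofReal_mul ha.le,
    ENNReal.ofReal_mul (by positivity), hunscaled, ← mul_assoc, ← ENNReal.ofReal_mul ha.le,
    mul_inv_cancel₀ ha.ne', ENNReal.ofReal_one, one_mul]

/-- `u₊ ^ B / Γ(B + 1)`, the kernel of the Riemann–Liouville integral of order `B + 1`. Since
`0 ^ 0 = 1`, `rlKernel 0` is the indicator of `[0, ∞)`. -/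
noncomputable def rlKernel (B u : ℝ) : ℝ≥0∞ :=
  if 0 ≤ u then ENNReal.ofReal (u ^ B / Gamma (B + 1)) else 0

@[fun_prop]
lemma measurable_rlKernel (B : ℝ) : Measurable (rlKernel B) :=
  Measurable.ite measurableSet_Ici (by fun_prop) measurable_const

lemma rlKernel_of_nonneg {B u : ℝ} (hu : 0 ≤ u) :
    rlKernel B u = ENNReal.ofReal (u ^ B / Gamma (B + 1)) :=
  if_pos hu

lemma rlKernel_of_neg {B u : ℝ} (hu : u < 0) : rlKernel B u = 0 :=
  if_neg hu.not_ge

lemma nakagamiPDF_of_nonpos {m Ω x : ℝ} (hx : x ≤ 0) : nakagamiPDF m Ω x = 0 :=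
  if_neg hx.not_gt

@[fun_prop]
lemma measurable_nakagamiPDF (m Ω : ℝ) : Measurable (nakagamiPDF m Ω) :=
  Measurable.ite measurableSet_Ioi (by fun_prop) measurable_const

lemma nakagamiPDF_nonneg {m Ω : ℝ} (hm : 0 < m) (hΩ : 0 < Ω) (x : ℝ) :
    0 ≤ nakagamiPDF m Ω x := by
  unfold nakagamiPDF
  split_ifs <;> positivity

lemma nakagamiPDF_le {m Ω x : ℝ} (hm : 0 < m) (hΩ : 0 < Ω) (hx : 0 < x) :
    nakagamiPDF m Ω x ≤ 2 * Ω ^ m / Gamma m * x ^ (2 * m - 1) := by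
  rw [nakagamiPDF, if_pos hx]
  exact mul_le_of_le_one_right (by positivity) (exp_le_one_iff.2 (by nlinarith))

/- The interval is closed at `b / c` because `rlKernel 0 0 = 1`. -/
lemma nakagamiPDF_mul_rlKernel_le {m Ω B b c : ℝ} (hm : 0 < m) (hΩ : 0 < Ω) (hB : 0 ≤ B)
    (hc : 0 < c) (t : ℝ) :
    ENNReal.ofReal (nakagamiPDF m Ω t) * rlKernel B (b - c * t) ≤
      (Ioc 0 (b / c)).indicator (fun t => ENNReal.ofReal (2 * Ω ^ m / Gamma m / Gamma (B + 1)) *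
        ENNReal.ofReal (t ^ (2 * m - 1) * (b - c * t) ^ B)) t := by
  by_cases ht : t ∈ Ioc 0 (b / c)
  · have hbt : 0 ≤ b - c * t := by
      have := (le_div_iff₀' hc).1 ht.2
      linarith
    rw [indicator_of_mem ht, rlKernel_of_nonneg hbt,
      ← ENNReal.ofReal_mul (nakagamiPDF_nonneg hm hΩ t), ← ENNReal.ofReal_mul (by positivity)]
    apply ENNReal.ofReal_le_ofReal
    calc nakagamiPDF m Ω t * ((b - c * t) ^ B / Gamma (B + 1))
        ≤ 2 * Ω ^ m / Gamma m * t ^ (2 * m - 1) * ((b - c * t) ^ B / Gamma (B + 1)) :=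
          mul_le_mul_of_nonneg_right (nakagamiPDF_le hm hΩ ht.1) (by positivity)
      _ = _ := by ring
  · rw [indicator_of_notMem ht]
    rcases le_or_gt t 0 with ht0 | ht0
    · rw [nakagamiPDF_of_nonpos ht0, ENNReal.ofReal_zero, zero_mul]
    · have hbt : b - c * t < 0 := by
        have := (div_lt_iff₀' hc).1 (not_le.1 fun h => ht ⟨ht0, h⟩)
        linarith
      rw [rlKernel_of_neg hbt, mul_zero]

namespace IsNakagami

variable {E : Type*} [MeasurableSpace E] {P : Measure E} {X : E → ℝ} {m Ω : ℝ}

lemma lintegral_comp (hX : IsNakagami P X m Ω) (hXm : Measurable X) {f : ℝ → ℝ≥0∞}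
    (hf : Measurable f) :
    ∫⁻ ω, f (X ω) ∂P = ∫⁻ t, ENNReal.ofReal (nakagamiPDF m Ω t) * f t := by
  rw [← lintegral_map hf hXm, hX, lintegral_withDensity_eq_lintegral_mul _ (by fun_prop) hf]
  rfl

lemma ae_pos (hX : IsNakagami P X m Ω) (hXm : Measurable X) : ∀ᵐ ω ∂P, 0 < X ω := by
  rw [← ae_map_iff hXm.aemeasurable measurableSet_Ioi, hX,
    ae_withDensity_iff (by fun_prop)]
  refine Filter.Eventually.of_forall fun x hx => ?_
  by_contra hx0
  exact hx (by rw [nakagamiPDF_of_nonpos (not_lt.1 hx0), ENNReal.ofReal_zero])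

lemma lintegral_rpow_neg (hX : IsNakagami P X m Ω) (hXm : Measurable X) (hm : 0 < m)
    (hΩ : 0 < Ω) {s : ℝ} (hs : s < 2 * m) :
    ∫⁻ ω, ENNReal.ofReal (X ω) ^ (-s) ∂P =
      ENNReal.ofReal (Ω ^ (s / 2) * (Gamma (m - s / 2) / Gamma m)) := by
  set f : ℝ → ℝ := fun t => 2 * Ω ^ m / Gamma m * (t ^ (2 * m - 1 - s) * exp (-Ω * t ^ 2))
  have hf : ∀ t, ENNReal.ofReal (nakagamiPDF m Ω t) * ENNReal.ofReal t ^ (-s) =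
      (Ioi 0).indicator (fun t => ENNReal.ofReal (f t)) t := by
    intro t
    rcases le_or_gt t 0 with ht | ht
    · rw [nakagamiPDF_of_nonpos ht, indicator_of_notMem (notMem_Ioi.2 ht), ENNReal.ofReal_zero,
        zero_mul]
    · rw [indicator_of_mem (mem_Ioi.2 ht), ENNReal.ofReal_rpow_of_pos ht,
        ← ENNReal.ofReal_mul (nakagamiPDF_nonneg hm hΩ t), nakagamiPDF, if_pos ht]
      simp only [f, sub_eq_add_neg (2 * m - 1) s, Real.rpow_add ht]
      ring_nf
  have hmoment : ∫ t in Ioi 0, t ^ (2 * m - 1 - s) * exp (-Ω * t ^ 2) =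
      Ω ^ (-(m - s / 2)) * (1 / 2) * Gamma (m - s / 2) := by
    have h := integral_rpow_mul_exp_neg_mul_rpow two_pos (by linarith : -1 < 2 * m - 1 - s) hΩ
    simp_rw [Real.rpow_two] at h
    rw [h, show (2 * m - 1 - s + 1) / 2 = m - s / 2 by ring,
      show -(2 * m - 1 - s + 1) / 2 = -(m - s / 2) by ring]
  rw [hX.lintegral_comp hXm (f := fun t => ENNReal.ofReal t ^ (-s)) (by fun_prop),
    lintegral_congr hf, lintegral_indicator measurableSet_Ioi,
    ← ofReal_integral_eq_lintegral_ofReal, integral_const_mul, hmoment]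
  · congr 1
    rw [show Ω ^ (s / 2) = Ω ^ m * Ω ^ (-(m - s / 2)) by rw [← Real.rpow_add hΩ]; ring_nf]
    field_simp
  · exact (integrableOn_rpow_mul_exp_neg_mul_sq hΩ (by linarith)).const_mul _
  · exact ae_restrict_of_forall_mem measurableSet_Ioi fun t (ht : 0 < t) => by positivity

end IsNakagami

section

variable {E : Type*} [MeasurableSpace E] {P : Measure E}

lemma ProbabilityTheory.iIndepFun.curry {ι κ 𝓧 : Type*} [MeasurableSpace 𝓧]
    {X : ι → κ → E → 𝓧} (h : iIndepFun (fun p : ι × κ => X p.1 p.2) P)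
    (hX : ∀ i j, Measurable (X i j)) :
    iIndepFun (fun i ω j => X i j ω) P := by
  have := h.isProbabilityMeasure
  have := fun i j => Measure.isProbabilityMeasure_map (μ := P) (hX i j).aemeasurable
  rw [iIndepFun_iff_map_fun_eq_infinitePi_map fun i => measurable_pi_lambda _ (hX i)]
  have hcurry : (fun ω i j => X i j ω) =
      MeasurableEquiv.curry ι κ 𝓧 ∘ fun ω (p : ι × κ) => X p.1 p.2 ω :=
    rfl
  rw [hcurry, ← Measure.map_map (f := fun ω (p : ι × κ) => X p.1 p.2 ω)
      (MeasurableEquiv.measurable _) (measurable_pi_lambda _ fun p => hX p.1 p.2),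
    h.map_fun_eq_infinitePi_map (X := fun p : ι × κ => X p.1 p.2) fun p => hX p.1 p.2,
    Measure.infinitePi_map_curry (fun i j => P.map (X i j))]
  congr with i : 1
  exact ((h.precomp (Prod.mk_right_injective i)).map_fun_eq_infinitePi_map (hX i)).symm

lemma ProbabilityTheory.IndepFun.lintegral_comp_eq_lintegral_lintegral {α β : Type*}
    [MeasurableSpace α] [MeasurableSpace β] [IsFiniteMeasure P] {Y : E → α} {Z : E → β}
    (hYZ : IndepFun Y Z P) (hY : Measurable Y)
    (hZ : Measurable Z) {F : α × β → ℝ≥0∞} (hF : Measurable F) :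
    ∫⁻ ω, F (Y ω, Z ω) ∂P = ∫⁻ ω', ∫⁻ ω, F (Y ω, Z ω') ∂P ∂P := by
  rw [← lintegral_map hF (hY.prodMk hZ),
    (indepFun_iff_map_prod_eq_prod_map_map hY.aemeasurable hZ.aemeasurable).1 hYZ,
    lintegral_prod_symm _ hF.aemeasurable, lintegral_map hF.lintegral_prod_left' hZ]
  congr with ω'
  exact lintegral_map (hF.comp measurable_prodMk_right) hY

/-- The small-ball estimate `P(Y ≤ x) ≤ G x ^ a / Γ(a + 1)`, strengthened to all Riemann–Liouville
integrals of the distribution function of every rescaling `c Y`. -/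
def RLBound (P : Measure E) (Y : E → ℝ) (G : ℝ≥0∞) (a : ℝ) : Prop :=
  ∀ B, 0 ≤ B → ∀ b c, 0 < c →
    ∫⁻ ω, rlKernel B (b - c * Y ω) ∂P ≤ G * ENNReal.ofReal c ^ (-a) * rlKernel (B + a) b

lemma IsNakagami.rlBound {X : E → ℝ} {m Ω : ℝ} (hX : IsNakagami P X m Ω) (hXm : Measurable X)
    (hm : 0 < m) (hΩ : 0 < Ω) :
    RLBound P X (ENNReal.ofReal (2 * (Gamma (2 * m) / Gamma m) * Ω ^ m)) (2 * m) := by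
  intro B hB b c hc
  rw [hX.lintegral_comp hXm (f := fun t => rlKernel B (b - c * t)) (by fun_prop)]
  refine (lintegral_mono (nakagamiPDF_mul_rlKernel_le hm hΩ hB hc)).trans ?_
  rw [lintegral_indicator measurableSet_Ioc, lintegral_const_mul' _ _ ENNReal.ofReal_ne_top]
  rcases le_or_gt b 0 with hb | hb
  · rw [Ioc_eq_empty (div_nonpos_of_nonpos_of_nonneg hb hc.le).not_gt, Measure.restrict_empty,
      lintegral_zero_measure, mul_zero]
    exact bot_le
  · have hbeta := setLIntegral_Ioc_rpow_mul_sub_rpow (p := 2 * m) (q := B + 1) (by linarith)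
      (by linarith) hb hc
    rw [add_sub_cancel_right] at hbeta
    rw [hbeta, rlKernel_of_nonneg hb.le, ENNReal.ofReal_rpow_of_pos hc,
      ← ENNReal.ofReal_mul (by positivity), ← ENNReal.ofReal_mul (by positivity),
      ← ENNReal.ofReal_mul (by positivity)]
    apply le_of_eq
    congr 1
    rw [beta, show 2 * m + (B + 1) - 1 = B + 2 * m by ring,
      show 2 * m + (B + 1) = B + 2 * m + 1 by ring]
    field_simp

lemma RLBound.measure_le {Y : E → ℝ} {G : ℝ≥0∞} {a : ℝ} (hYb : RLBound P Y G a)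
    (hY : Measurable Y) (h : ℝ) : P {ω | Y ω ≤ h} ≤ G * rlKernel a h := by
  have hle := hYb 0 le_rfl h 1 one_pos
  simp only [one_mul, ENNReal.ofReal_one, ENNReal.one_rpow, mul_one, zero_add] at hle
  refine le_trans (le_of_eq ?_) hle
  rw [← lintegral_indicator_one (measurableSet_le hY measurable_const)]
  congr with ω
  by_cases hω : Y ω ≤ h
  · rw [indicator_of_mem (show ω ∈ {ω | Y ω ≤ h} from hω), rlKernel_of_nonneg (sub_nonneg.2 hω),
      Real.rpow_zero, zero_add, Gamma_one, div_one, ENNReal.ofReal_one, Pi.one_apply]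
  · rw [indicator_of_notMem (show ω ∉ {ω | Y ω ≤ h} from hω),
      rlKernel_of_neg (sub_neg.2 (not_le.1 hω))]

lemma RLBound.toReal_measure_le {Y : E → ℝ} {G a : ℝ} (hYb : RLBound P Y (ENNReal.ofReal G) a)
    (hY : Measurable Y) (hG : 0 ≤ G) (ha : 0 ≤ a) {h : ℝ} (hh : 0 ≤ h) :
    (P {ω | Y ω ≤ h}).toReal ≤ G * h ^ a / Gamma (a + 1) := by
  have hcdf := hYb.measure_le hY h
  rw [rlKernel_of_nonneg hh, ← ENNReal.ofReal_mul hG] at hcdf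
  rw [mul_div_assoc, ← ENNReal.toReal_ofReal (by positivity : 0 ≤ G * (h ^ a / Gamma (a + 1)))]
  exact ENNReal.toReal_mono ENNReal.ofReal_ne_top hcdf

lemma RLBound.add [IsFiniteMeasure P] {Y Z : E → ℝ} {G₁ G₂ : ℝ≥0∞} {a₁ a₂ : ℝ}
    (hYb : RLBound P Y G₁ a₁) (hZb : RLBound P Z G₂ a₂) (ha₁ : 0 ≤ a₁) (hYZ : IndepFun Y Z P)
    (hY : Measurable Y) (hZ : Measurable Z) :
    RLBound P (fun ω => Y ω + Z ω) (G₁ * G₂) (a₁ + a₂) := by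
  intro B hB b c hc
  calc ∫⁻ ω, rlKernel B (b - c * (Y ω + Z ω)) ∂P
      = ∫⁻ ω', ∫⁻ ω, rlKernel B ((b - c * Z ω') - c * Y ω) ∂P ∂P := by
        rw [hYZ.lintegral_comp_eq_lintegral_lintegral hY hZ
          (F := fun p => rlKernel B (b - c * (p.1 + p.2))) (by fun_prop)]
        simp only [mul_add, sub_sub, add_comm]
    _ ≤ ∫⁻ ω', G₁ * ENNReal.ofReal c ^ (-a₁) * rlKernel (B + a₁) (b - c * Z ω') ∂P :=
        lintegral_mono fun ω' => hYb B hB _ c hc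
    _ = G₁ * ENNReal.ofReal c ^ (-a₁) * ∫⁻ ω', rlKernel (B + a₁) (b - c * Z ω') ∂P :=
        lintegral_const_mul _ (by fun_prop)
    _ ≤ G₁ * ENNReal.ofReal c ^ (-a₁) *
          (G₂ * ENNReal.ofReal c ^ (-a₂) * rlKernel (B + a₁ + a₂) b) := by
        gcongr
        exact hZb _ (by positivity) b c hc
    _ = G₁ * G₂ * ENNReal.ofReal c ^ (-(a₁ + a₂)) * rlKernel (B + (a₁ + a₂)) b := by
        rw [neg_add, ENNReal.rpow_add _ _ (ENNReal.ofReal_pos.2 hc).ne' ENNReal.ofReal_ne_top,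
          add_assoc]
        ring

lemma RLBound.mul [IsFiniteMeasure P] {Y Z : E → ℝ} {G : ℝ≥0∞} {a : ℝ} (hYb : RLBound P Y G a)
    (hYZ : IndepFun Y Z P) (hY : Measurable Y) (hZ : Measurable Z)
    (hZpos : ∀ᵐ ω ∂P, 0 < Z ω) :
    RLBound P (fun ω => Y ω * Z ω) (G * ∫⁻ ω, ENNReal.ofReal (Z ω) ^ (-a) ∂P) a := by
  intro B hB b c hc
  calc ∫⁻ ω, rlKernel B (b - c * (Y ω * Z ω)) ∂P
      = ∫⁻ ω', ∫⁻ ω, rlKernel B (b - (c * Z ω') * Y ω) ∂P ∂P := by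
        rw [hYZ.lintegral_comp_eq_lintegral_lintegral hY hZ
          (F := fun p => rlKernel B (b - c * (p.1 * p.2))) (by fun_prop)]
        simp only [mul_comm, mul_left_comm]
    _ ≤ ∫⁻ ω', G * ENNReal.ofReal (c * Z ω') ^ (-a) * rlKernel (B + a) b ∂P :=
        lintegral_mono_ae (hZpos.mono fun ω' hω' => hYb B hB b _ (mul_pos hc hω'))
    _ = G * ENNReal.ofReal c ^ (-a) * rlKernel (B + a) b *
          ∫⁻ ω', ENNReal.ofReal (Z ω') ^ (-a) ∂P := by
        rw [← lintegral_const_mul _ (by fun_prop)]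
        congr with ω'
        rw [ENNReal.ofReal_mul hc.le,
          ENNReal.mul_rpow_of_ne_top ENNReal.ofReal_ne_top ENNReal.ofReal_ne_top]
        ring
    _ = _ := by ring

lemma rlBound_zero [IsProbabilityMeasure P] : RLBound P (fun _ => 0) 1 0 := by
  intro B _ b c _
  simp

lemma RLBound.finsetSum [IsProbabilityMeasure P] {ι : Type*} {Y : ι → E → ℝ}
    (hind : iIndepFun Y P) (hY : ∀ i, Measurable (Y i)) {G : ι → ℝ≥0∞} {a : ι → ℝ} (s : Finset ι)
    (hYb : ∀ i ∈ s, RLBound P (Y i) (G i) (a i)) (ha : ∀ i ∈ s, 0 ≤ a i) :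
    RLBound P (fun ω => ∑ i ∈ s, Y i ω) (∏ i ∈ s, G i) (∑ i ∈ s, a i) := by
  classical
  induction s using Finset.induction_on with
  | empty => simpa using rlBound_zero
  | insert j s hj ih =>
    have hindep : IndepFun (fun ω => ∑ i ∈ s, Y i ω) (Y j) P := by
      simpa only [Finset.sum_fn] using hind.indepFun_finsetSum_of_notMem hY hj
    have hsum := (ih (fun i hi => hYb i (Finset.mem_insert_of_mem hi))
      (fun i hi => ha i (Finset.mem_insert_of_mem hi))).add (hYb j (Finset.mem_insert_self j s))
      (Finset.sum_nonneg fun i hi => ha i (Finset.mem_insert_of_mem hi)) hindep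
      (Finset.measurable_fun_sum s fun i _ => hY i) (hY j)
    simpa only [Finset.sum_insert hj, Finset.prod_insert hj, add_comm, mul_comm] using hsum

lemma RLBound.mul_finsetProd [IsFiniteMeasure P] {ι : Type*} [DecidableEq ι] {Y : ι → E → ℝ}
    (hind : iIndepFun Y P) (hY : ∀ i, Measurable (Y i)) {i₀ : ι} {G : ℝ≥0∞} {a : ℝ}
    (hYb : RLBound P (Y i₀) G a) (s : Finset ι) (hi₀ : i₀ ∉ s)
    (hpos : ∀ i ∈ s, ∀ᵐ ω ∂P, 0 < Y i ω) :
    RLBound P (fun ω => Y i₀ ω * ∏ i ∈ s, Y i ω)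
      (G * ∏ i ∈ s, ∫⁻ ω, ENNReal.ofReal (Y i ω) ^ (-a) ∂P) a := by
  induction s using Finset.induction_on with
  | empty => simpa using hYb
  | insert j s hj ih =>
    have hi₀s : i₀ ∉ s := fun h => hi₀ (Finset.mem_insert_of_mem h)
    have hindep : IndepFun (fun ω => Y i₀ ω * ∏ i ∈ s, Y i ω) (Y j) P := by
      have hj' : j ∉ insert i₀ s := by
        simp only [Finset.mem_insert, not_or]
        exact ⟨fun h => hi₀ (by rw [← h]; exact Finset.mem_insert_self j s), hj⟩
      simpa only [Finset.prod_fn, Finset.prod_insert hi₀s, Pi.mul_def] using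
        hind.indepFun_finsetProd_of_notMem hY hj'
    have hprod := (ih hi₀s fun i hi => hpos i (Finset.mem_insert_of_mem hi)).mul hindep
      ((hY i₀).mul (Finset.measurable_fun_prod s fun i _ => hY i)) (hY j)
      (hpos j (Finset.mem_insert_self j s))
    simpa only [Finset.prod_insert hj, mul_comm, mul_left_comm, mul_assoc] using hprod

end

section NakagamiProduct

variable {ι : Type*}

lemma Gamma_sub_div_Gamma_pos {m : ι → ℝ} {i₀ : ι} (hm : ∀ i, 0 < m i)
    (hlt : ∀ i, i ≠ i₀ → m i₀ < m i) {i : ι} (hi : i ≠ i₀) :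
    0 < Gamma (m i - m i₀) / Gamma (m i) :=
  div_pos (Gamma_pos_of_pos (sub_pos.2 (hlt i hi))) (Gamma_pos_of_pos (hm i))

variable [Fintype ι] [DecidableEq ι]

/-- The factor of `g` contributed by one column of the sum-product. -/
noncomputable def nakagamiProdConst (m Ω : ι → ℝ) (i₀ : ι) : ℝ :=
  2 * (Gamma (2 * m i₀) / Gamma (m i₀)) *
    (∏ i ∈ Finset.univ.erase i₀, Gamma (m i - m i₀) / Gamma (m i)) * ∏ i, Ω i ^ m i₀

variable {m Ω : ι → ℝ} {i₀ : ι}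

lemma nakagamiProdConst_nonneg (hm : ∀ i, 0 < m i) (hΩ : ∀ i, 0 < Ω i)
    (hlt : ∀ i, i ≠ i₀ → m i₀ < m i) : 0 ≤ nakagamiProdConst m Ω i₀ := by
  have hprod := Finset.prod_nonneg fun i (hi : i ∈ Finset.univ.erase i₀) =>
    (Gamma_sub_div_Gamma_pos hm hlt (Finset.ne_of_mem_erase hi)).le
  have hΩprod := Finset.prod_nonneg fun i (_ : i ∈ Finset.univ) =>
    (rpow_pos_of_pos (hΩ i) (m i₀)).le
  have := hm i₀
  unfold nakagamiProdConst
  positivity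

lemma rlBound_prod_of_isNakagami {E : Type*} [MeasurableSpace E] {P : Measure E}
    [IsProbabilityMeasure P] {Y : ι → E → ℝ} (hind : iIndepFun Y P) (hY : ∀ i, Measurable (Y i))
    (hNak : ∀ i, IsNakagami P (Y i) (m i) (Ω i)) (hm : ∀ i, 0 < m i) (hΩ : ∀ i, 0 < Ω i)
    (hlt : ∀ i, i ≠ i₀ → m i₀ < m i) :
    RLBound P (fun ω => ∏ i, Y i ω) (ENNReal.ofReal (nakagamiProdConst m Ω i₀)) (2 * m i₀) := by
  have hmoment : ∀ i ∈ Finset.univ.erase i₀, ∫⁻ ω, ENNReal.ofReal (Y i ω) ^ (-(2 * m i₀)) ∂P =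
      ENNReal.ofReal (Ω i ^ m i₀ * (Gamma (m i - m i₀) / Gamma (m i))) := fun i hi => by
    rw [(hNak i).lintegral_rpow_neg (hY i) (hm i) (hΩ i)
      (by linarith [hlt i (Finset.ne_of_mem_erase hi)]), mul_div_cancel_left₀ _ two_ne_zero]
  have h := ((hNak i₀).rlBound (hY i₀) (hm i₀) (hΩ i₀)).mul_finsetProd hind hY
    (Finset.univ.erase i₀) (Finset.notMem_erase i₀ _) fun i _ => (hNak i).ae_pos (hY i)
  have hΩpos := fun i => rpow_pos_of_pos (hΩ i) (m i₀)
  rw [Finset.prod_congr rfl hmoment, ← ENNReal.ofReal_prod_of_nonneg fun i hi =>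
      (mul_pos (hΩpos i) (Gamma_sub_div_Gamma_pos hm hlt (Finset.ne_of_mem_erase hi))).le,
    ← ENNReal.ofReal_mul (by have := hΩpos i₀; have := hm i₀; positivity)] at h
  convert h using 2
  · exact (Finset.mul_prod_erase _ (Y · _) (Finset.mem_univ i₀)).symm
  · rw [nakagamiProdConst, ← Finset.mul_prod_erase Finset.univ (fun i => Ω i ^ m i₀)
      (Finset.mem_univ i₀), Finset.prod_mul_distrib]
    ring

end NakagamiProduct

theorem sum_prod_nakagami_cdf_upper_bound_general
    {E : Type*} [MeasurableSpace E] (P : Measure E) [IsProbabilityMeasure P]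
    (L N : ℕ) (hL : 0 < L)
    (m Ωp : Fin L → Fin N → ℝ)
    (hm : ∀ l n, 0 < m l n) (hΩ : ∀ l n, 0 < Ωp l n)
    (X : Fin L → Fin N → E → ℝ) (hX : ∀ l n, Measurable (X l n))
    (hNak : ∀ l n, IsNakagami P (X l n) (m l n) (Ωp l n))
    (hIndep : iIndepFun (fun p : Fin L × Fin N => X p.1 p.2) P)
    (hm1 : ∀ n, ∀ l, l ≠ ⟨0, hL⟩ → m ⟨0, hL⟩ n < m l n)
    (t' g : ℝ)
    (ht' : t' = ∑ n, m ⟨0, hL⟩ n)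
    (hg : g = ∏ n, (2 * (Real.Gamma (2 * m ⟨0, hL⟩ n) / Real.Gamma (m ⟨0, hL⟩ n)) *
        (∏ l ∈ Finset.univ.erase ⟨0, hL⟩,
          Real.Gamma (m l n - m ⟨0, hL⟩ n) / Real.Gamma (m l n)) *
        ∏ l, Ωp l n ^ m ⟨0, hL⟩ n))
    (h : ℝ) (hh : 0 ≤ h) :
    (P {ω | ∑ n, ∏ l, X l n ω ≤ h}).toReal ≤
      g * h ^ (2 * t') / Real.Gamma (2 * t' + 1) := by
  set z : Fin L := ⟨0, hL⟩
  have hconst : ∀ n, 0 ≤ nakagamiProdConst (m · n) (Ωp · n) z := fun n =>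
    nakagamiProdConst_nonneg (fun l => hm l n) (fun l => hΩ l n) (hm1 n)
  have hcolumns : iIndepFun (fun n ω => ∏ l, X l n ω) P :=
    ((hIndep.precomp Prod.swap_injective).curry (X := fun n l => X l n) fun n l => hX l n).comp
      (fun _ x => ∏ l, x l) fun _ => by fun_prop
  have hsum := RLBound.finsetSum hcolumns (fun n => by fun_prop) Finset.univ
    (fun n _ => rlBound_prod_of_isNakagami (hIndep.precomp (Prod.mk_left_injective n))
      (fun l => hX l n) (fun l => hNak l n) (fun l => hm l n) (fun l => hΩ l n) (hm1 n))
    (fun n _ => by linarith [hm z n])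
  have hg' : ∏ n, nakagamiProdConst (m · n) (Ωp · n) z = g := hg.symm
  rw [← ENNReal.ofReal_prod_of_nonneg fun n _ => hconst n, hg', ← Finset.mul_sum, ← ht'] at hsum
  exact hsum.toReal_measure_le (by fun_prop) (hg' ▸ Finset.prod_nonneg fun n _ => hconst n)
    (by rw [ht']; exact mul_nonneg zero_le_two (Finset.sum_nonneg fun n _ => (hm z n).le)) hh

/-- CDF upper bound for the sum-product `H = ∑_n ∏_l X_{l,n}` of mutually independent
Nakagami random variables: for every `h ≥ 0`, `P(H ≤ h) ≤ g h^(2t') / Γ(2t' + 1)`, with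
`t' = ∑_n m_{1,n}` and
`g = ∏_n [2 (Γ(2m_{1,n})/Γ(m_{1,n})) (∏_{l≥2} Γ(m_{l,n}-m_{1,n})/Γ(m_{l,n})) ∏_l Ω_{l,n}^{m_{1,n}}]`. -/
theorem sum_prod_nakagami_cdf_upper_bound
    {E : Type*} [MeasurableSpace E] (P : Measure E) [IsProbabilityMeasure P]
    (L N : ℕ) (hL : 0 < L) (hN : 0 < N)
    (m Ωp : Fin L → Fin N → ℝ)
    (hm : ∀ l n, 0 < m l n) (hΩ : ∀ l n, 0 < Ωp l n)
    (X : Fin L → Fin N → E → ℝ) (hX : ∀ l n, Measurable (X l n))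
    (hNak : ∀ l n, IsNakagami P (X l n) (m l n) (Ωp l n))
    (hIndep : iIndepFun (fun p : Fin L × Fin N => X p.1 p.2) P)
    (hm1 : ∀ n, ∀ l, l ≠ ⟨0, hL⟩ → m ⟨0, hL⟩ n < m l n)
    (t' g : ℝ)
    (ht' : t' = ∑ n, m ⟨0, hL⟩ n)
    (hg : g = ∏ n, (2 * (Real.Gamma (2 * m ⟨0, hL⟩ n) / Real.Gamma (m ⟨0, hL⟩ n)) *
        (∏ l ∈ Finset.univ.erase ⟨0, hL⟩,
          Real.Gamma (m l n - m ⟨0, hL⟩ n) / Real.Gamma (m l n)) *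
        ∏ l, Ωp l n ^ m ⟨0, hL⟩ n))
    (h : ℝ) (hh : 0 ≤ h) :
    (P {ω | ∑ n, ∏ l, X l n ω ≤ h}).toReal ≤
      g * h ^ (2 * t') / Real.Gamma (2 * t' + 1) :=
  sum_prod_nakagami_cdf_upper_bound_general P L N hL m Ωp hm hΩ X hX hNak hIndep hm1 t' g ht' hg h
    hh
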